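/- Let ★ be a semistar operation on an integral domain D and F a nonzero finitely generated fractional ideal. Then F is ★-e.a.b. if and only if ((FH)★ : F★) = H★ for every nonzero finitely generated fractional ideal H of D. -/
import Mathlib


variable (D : Type*) [CommRing D] [IsDomain D]

/-- A semistar operation on an integral domain `D`. -/
def IsSemistarOp (s : Submodule D (FractionRing D) → Submodule D (FractionRing D)) : Prop :=
  (∀ z : FractionRing D, z ≠ 0 → ∀ E : Submodule D (FractionRing D), E ≠ ⊥ →
      s (Submodule.span D {z} * E) = Submodule.span D {z} * s E) ∧
  (∀ E F : Submodule D (FractionRing D), E ≠ ⊥ → F ≠ ⊥ → E ≤ F → s E ≤ s F) ∧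
  (∀ E : Submodule D (FractionRing D), E ≠ ⊥ → E ≤ s E) ∧
  (∀ E : Submodule D (FractionRing D), E ≠ ⊥ → s (s E) = s E)

/-- `F` is `★`-e.a.b.: `(FG)★ ⊆ (FH)★` implies `G★ ⊆ H★` for all nonzero finitely
generated fractional ideals `G`, `H`. -/
def IsStarEab (s : Submodule D (FractionRing D) → Submodule D (FractionRing D))
    (F : Submodule D (FractionRing D)) : Prop :=
  ∀ G H : Submodule D (FractionRing D), G ≠ ⊥ → G.FG → H ≠ ⊥ → H.FG →
    s (F * G) ≤ s (F * H) → s G ≤ s H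

section Aux

variable {D}

lemma aux_mul_ne_bot {A B : Submodule D (FractionRing D)} (hA : A ≠ ⊥) (hB : B ≠ ⊥) :
    A * B ≠ ⊥ := by
  rw [Submodule.ne_bot_iff] at hA hB ⊢
  obtain ⟨a, ha, ha0⟩ := hA
  obtain ⟨b, hb, hb0⟩ := hB
  exact ⟨a * b, Submodule.mul_mem_mul ha hb, mul_ne_zero ha0 hb0⟩

variable {s : Submodule D (FractionRing D) → Submodule D (FractionRing D)}

lemma aux_s_ne_bot (hs : IsSemistarOp D s) {E : Submodule D (FractionRing D)} (hE : E ≠ ⊥) :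
    s E ≠ ⊥ := by
  intro h
  exact hE (le_bot_iff.mp (h ▸ hs.2.2.1 E hE))

lemma aux_mul_s_le (hs : IsSemistarOp D s) {A B : Submodule D (FractionRing D)}
    (hA : A ≠ ⊥) (hB : B ≠ ⊥) : A * s B ≤ s (A * B) := by
  rw [Submodule.mul_le]
  intro a ha y hy
  rcases eq_or_ne a 0 with rfl | ha0
  · simpa using (s (A * B)).zero_mem
  · have h1 : a * y ∈ Submodule.span D {a} * s B :=
      Submodule.mul_mem_mul (Submodule.mem_span_singleton_self a) hy
    rw [← hs.1 a ha0 B hB] at h1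
    refine hs.2.1 _ _ ?_ (aux_mul_ne_bot hA hB) ?_ h1
    · exact aux_mul_ne_bot (by simpa [Submodule.span_singleton_eq_bot] using ha0) hB
    · exact mul_le_mul' (Submodule.span_le.2 (by simpa using ha)) le_rfl

lemma aux_s_mul_s_le (hs : IsSemistarOp D s) {A B : Submodule D (FractionRing D)}
    (hA : A ≠ ⊥) (hB : B ≠ ⊥) : s A * s B ≤ s (A * B) := by
  have h1 : s A * s B ≤ s (s A * B) :=
    aux_mul_s_le hs (aux_s_ne_bot hs hA) hB
  have h2 : s A * B ≤ s (B * A) := by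
    rw [mul_comm (s A) B]
    exact aux_mul_s_le hs hB hA
  have h3 : s (s A * B) ≤ s (s (B * A)) :=
    hs.2.1 _ _ (aux_mul_ne_bot (aux_s_ne_bot hs hA) hB)
      (aux_s_ne_bot hs (aux_mul_ne_bot hB hA)) h2
  rw [hs.2.2.2 _ (aux_mul_ne_bot hB hA), mul_comm B A] at h3
  exact h1.trans h3

end Aux

/-- A nonzero finitely generated fractional ideal `F` is `★`-e.a.b. iff
`((FH)★ : F★) = H★` for every nonzero finitely generated fractional ideal `H`. -/
theorem starEab_iff_colon (s : Submodule D (FractionRing D) → Submodule D (FractionRing D))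
    (hs : IsSemistarOp D s)
    (F : Submodule D (FractionRing D)) (hF : F ≠ ⊥) (hfg : F.FG) :
    IsStarEab D s F ↔
      ∀ H : Submodule D (FractionRing D), H ≠ ⊥ → H.FG → s (F * H) / s F = s H := by
  constructor
  · intro heab H hH hHfg
    apply le_antisymm
    · intro x hx
      rw [Submodule.mem_div_iff_forall_mul_mem] at hx
      rcases eq_or_ne x 0 with rfl | hx0
      · exact (s H).zero_mem
      · have hspan : (Submodule.span D {x} : Submodule D (FractionRing D)) ≠ ⊥ := by
          simpa [Submodule.span_singleton_eq_bot] using hx0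
        have h1 : Submodule.span D {x} * s F ≤ s (F * H) := by
          rw [Submodule.mul_le]
          intro a ha y hy
          rw [Submodule.mem_span_singleton] at ha
          obtain ⟨c, rfl⟩ := ha
          rw [smul_mul_assoc]
          exact (s (F * H)).smul_mem c (hx y hy)
        rw [← hs.1 x hx0 F hF] at h1
        have h2 : s (F * Submodule.span D {x}) ≤ s (F * H) := by
          rwa [mul_comm F _]
        have h3 := heab (Submodule.span D {x}) H hspan (Submodule.fg_span_singleton x)
          hH hHfg h2
        exact h3 (hs.2.2.1 _ hspan (Submodule.mem_span_singleton_self x))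
    · intro x hx
      rw [Submodule.mem_div_iff_forall_mul_mem]
      intro y hy
      have : x * y ∈ s H * s F := Submodule.mul_mem_mul hx hy
      have h := aux_s_mul_s_le hs hH hF this
      rwa [mul_comm H F] at h
  · intro hc G H hG hGfg hH hHfg hle
    rw [← hc G hG hGfg, ← hc H hH hHfg]
    intro x hx
    rw [Submodule.mem_div_iff_forall_mul_mem] at hx ⊢
    exact fun y hy => hle (hx y hy)
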